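/- arXiv:2410.00908 — 5 statements merged into one kernel-verified Lean document; each statement's English description precedes it below -/
import Mathlib

section
/- For all D ≥ 1 and n_max ≥ 1 there exists N₀ such that for every N ≥ N₀ the following holds: if for each 1 ≤ n ≤ n_max a coefficient function λ_n : (Perm(Fin n))^D → ℂ is given which is invariant under simultaneous conjugation (λ_n(η σ_1 η⁻¹, …, η σ_D η⁻¹) = λ_n(σ_1,…,σ_D) for every η ∈ Perm(Fin n)), and if Σ_{n=1}^{n_max} Σ_{σ ∈ (Perm(Fin n))^D} λ_n(σ) · Tr_σ(A) = 0 for every mixed tensor A of size N with D indices, then λ_n(σ) = 0 for all n ≤ n_max and all σ. (Linear independence of the mixed trace-invariants, one per simultaneous-conjugacy class, for N large enough.) -/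
/-!
Since `Tr_σ(t • A) = tⁿ Tr_σ(A)` for `σ` of size `n`, the relation splits into one relation per
degree `n`. In degree `n ≤ N`, fix `τ` and an embedding `e : Fin n ↪ Fin N`, and evaluate on the
partial permutation tensors `P_S = ∑_{k ∈ S} e_k^{⊗D} ⊗ ⨂_c e_{τ_c⁻¹ k}` for `S ⊆ Fin n`.
Then `Tr_σ(P_S)` counts the maps `g : Fin n → S` with `g ∘ σ_c = τ_c ∘ g`, and inclusion–exclusion
over `S` keeps only the bijective ones, i.e. the permutations `π` with `σ_c = π⁻¹ τ_c π`.
The alternating sum of the relations is therefore `∑_π λ(π⁻¹ τ π) = n! λ(τ)` by conjugation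
invariance, so `λ(τ) = 0`.
-/

/-- The trace-invariant of a mixed tensor `A` of size `N` with `D` indices,
associated to a `D`-tuple `σ` of permutations of `Fin n`. -/
noncomputable def trInv {N D n : ℕ} (σ : Fin D → Equiv.Perm (Fin n))
    (A : (Fin D → Fin N) → (Fin D → Fin N) → ℂ) : ℂ :=
  ∑ i : Fin n → Fin D → Fin N,
    ∏ s : Fin n, A (fun c => i s c) (fun c => i ((σ c)⁻¹ s) c)

open Finset

theorem card_filter_surjective_eq_alternating_sum {α β : Type*} [Fintype α] [Fintype β]
    [DecidableEq α] [DecidableEq β] (p : (α → β) → Prop) [DecidablePred p] :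
    (#{g | Function.Surjective g ∧ p g} : ℤ) =
      ∑ T : Finset β, (-1 : ℤ) ^ #T * #{g | (∀ a, g a ∉ T) ∧ p g} := by
  let missing (b : β) : Finset (α → β) := {g | ∀ a, g a ≠ b}
  have h := inclusion_exclusion_sum_inf_compl (G := ℤ) univ missing
    (fun g => if p g then 1 else 0)
  have hsurj : {g ∈ univ.inf fun b => (missing b)ᶜ | p g} =
      ({g | Function.Surjective g ∧ p g} : Finset (α → β)) := by
    ext g
    rw [mem_filter, mem_filter]
    simp [missing, mem_inf, Function.Surjective]
  have havoid (T : Finset β) :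
      {g ∈ T.inf missing | p g} = ({g | (∀ a, g a ∉ T) ∧ p g} : Finset (α → β)) := by
    ext g
    simp only [missing, mem_filter, mem_inf, mem_univ, true_and, ne_eq]
    grind
  simp only [sum_boole, smul_eq_mul, powerset_univ] at h
  rw [hsurj] at h
  simpa only [havoid] using h

theorem card_filter_surjective_eq_card_perm {α : Type*} [Fintype α] [DecidableEq α]
    (p : (α → α) → Prop) [DecidablePred p] :
    #{g | Function.Surjective g ∧ p g} = #{π : Equiv.Perm α | p π} := by
  symm
  refine card_nbij' (fun π => ⇑π)
    (fun g => if hg : Function.Surjective g then Equiv.ofBijective g hg.bijective_of_finite else 1)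
    ?_ ?_ ?_ ?_
  · intro π hπ
    simp only [coe_filter, Set.mem_ofPred_eq, mem_univ, true_and] at hπ ⊢
    exact ⟨π.surjective, hπ⟩
  · intro g hg
    simp only [coe_filter, Set.mem_ofPred_eq, mem_univ, true_and] at hg ⊢
    simpa [dif_pos hg.1] using hg.2
  · intro π _
    simp [π.surjective]
  · intro g hg
    simp only [coe_filter, Set.mem_ofPred_eq, mem_univ, true_and] at hg
    simp [dif_pos hg.1]

theorem sum_mul_card_filter_conj_eq_card_mul {G ι R : Type*} [Group G] [Fintype G] [DecidableEq G]
    [Fintype ι] [DecidableEq ι] [Semiring R] (lam : (ι → G) → R)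
    (hlam : ∀ σ η, lam (fun c => η * σ c * η⁻¹) = lam σ) (τ : ι → G) :
    ∑ σ : ι → G, lam σ * #{g | ∀ c, g * σ c = τ c * g} = Fintype.card G * lam τ := by
  have hconj (g : G) (σ : ι → G) :
      (∀ c, g * σ c = τ c * g) ↔ σ = fun c => g⁻¹ * τ c * g := by
    simp only [funext_iff, mul_assoc, eq_inv_mul_iff_mul_eq]
  calc ∑ σ : ι → G, lam σ * #{g | ∀ c, g * σ c = τ c * g}
      = ∑ g : G, ∑ σ : ι → G, if σ = (fun c => g⁻¹ * τ c * g) then lam σ else 0 := by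
        simp only [card_filter, Nat.cast_sum, mul_sum, hconj, Nat.cast_ite, Nat.cast_one,
          Nat.cast_zero, mul_ite, mul_one, mul_zero]
        exact sum_comm
    _ = ∑ g : G, lam τ := by
        refine sum_congr rfl fun g _ => ?_
        rw [sum_ite_eq' univ _ lam, if_pos (mem_univ _)]
        simpa using hlam τ g⁻¹
    _ = Fintype.card G * lam τ := by simp

theorem eq_zero_of_forall_sum_mul_pow_eq_zero {R : Type*} [CommRing R] [IsDomain R] [Infinite R]
    {s : Finset ℕ} {c : ℕ → R} (h : ∀ t, ∑ m ∈ s, c m * t ^ m = 0) {m : ℕ} (hm : m ∈ s) :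
    c m = 0 := by
  have hp : ∑ k ∈ s, Polynomial.C (c k) * Polynomial.X ^ k = 0 :=
    Polynomial.funext fun t => by simpa [Polynomial.eval_finsetSum] using h t
  simpa [Polynomial.finsetSum_coeff, Polynomial.coeff_C_mul, Polynomial.coeff_X_pow, hm]
    using congrArg (Polynomial.coeff · m) hp

theorem trInv_smul {N D n : ℕ} (σ : Fin D → Equiv.Perm (Fin n))
    (A : (Fin D → Fin N) → (Fin D → Fin N) → ℂ) (t : ℂ) :
    trInv σ (t • A) = t ^ n * trInv σ A := by
  simp only [trInv, mul_sum, Pi.smul_apply, smul_eq_mul, prod_mul_distrib, prod_const,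
    card_univ, Fintype.card_fin]

theorem sum_mul_trInv_eq_zero_of_sum_eq_zero {N D : ℕ} {s : Finset ℕ}
    {lam : (n : ℕ) → (Fin D → Equiv.Perm (Fin n)) → ℂ}
    (h : ∀ A : (Fin D → Fin N) → (Fin D → Fin N) → ℂ,
      ∑ n ∈ s, ∑ σ : Fin D → Equiv.Perm (Fin n), lam n σ * trInv σ A = 0)
    {n : ℕ} (hn : n ∈ s) (A : (Fin D → Fin N) → (Fin D → Fin N) → ℂ) :
    ∑ σ : Fin D → Equiv.Perm (Fin n), lam n σ * trInv σ A = 0 := by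
  refine eq_zero_of_forall_sum_mul_pow_eq_zero
    (c := fun m => ∑ σ : Fin D → Equiv.Perm (Fin m), lam m σ * trInv σ A) (fun t => ?_) hn
  rw [← h (t • A)]
  simp only [trInv_smul, sum_mul]
  refine sum_congr rfl fun m _ => sum_congr rfl fun σ _ => ?_
  ring

noncomputable def permTensor {N D n : ℕ} (τ : Fin D → Equiv.Perm (Fin n)) (e : Fin n ↪ Fin N)
    (S : Finset (Fin n)) : (Fin D → Fin N) → (Fin D → Fin N) → ℂ :=
  fun x y => ∑ k ∈ S, if x = (fun _ => e k) ∧ y = (fun c => e ((τ c)⁻¹ k)) then 1 else 0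

theorem trInv_permTensor_index_iff {N D n : ℕ} (σ τ : Fin D → Equiv.Perm (Fin n))
    (e : Fin n ↪ Fin N) (g : Fin n → Fin n) (i : Fin n → Fin D → Fin N) :
    (∀ s, (fun c => i s c) = (fun _ => e (g s)) ∧
        (fun c => i ((σ c)⁻¹ s) c) = (fun c => e ((τ c)⁻¹ (g s)))) ↔
      i = (fun s _ => e (g s)) ∧ ∀ c, g ∘ σ c = τ c ∘ g := by
  constructor
  · intro h
    obtain rfl : i = fun s _ => e (g s) := funext fun s => (h s).1
    refine ⟨rfl, fun c => funext fun s => ?_⟩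
    have := congrFun (h (σ c s)).2 c
    rw [Equiv.Perm.inv_def, Equiv.symm_apply_apply, e.apply_eq_iff_eq,
      Equiv.Perm.eq_inv_iff_eq] at this
    exact this.symm
  · rintro ⟨rfl, hg⟩ s
    refine ⟨rfl, funext fun c => congrArg e ?_⟩
    rw [Equiv.Perm.eq_inv_iff_eq, ← Function.comp_apply (f := τ c), ← hg c]
    simp

theorem trInv_permTensor {N D n : ℕ} (σ τ : Fin D → Equiv.Perm (Fin n)) (e : Fin n ↪ Fin N)
    (S : Finset (Fin n)) :
    trInv σ (permTensor τ e S) =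
      #{g : Fin n → Fin n | (∀ s, g s ∈ S) ∧ ∀ c, g ∘ σ c = τ c ∘ g} := by
  unfold trInv permTensor
  calc _ = ∑ i : Fin n → Fin D → Fin N, ∑ g ∈ Fintype.piFinset fun _ => S,
          if i = (fun s _ => e (g s)) ∧ ∀ c, g ∘ σ c = τ c ∘ g then (1 : ℂ) else 0 := by
        refine sum_congr rfl fun i _ => ?_
        rw [prod_univ_sum]
        refine sum_congr rfl fun g _ => ?_
        simp only [prod_boole, mem_univ, true_implies, trInv_permTensor_index_iff]
    _ = ∑ g ∈ Fintype.piFinset fun _ => S, if ∀ c, g ∘ σ c = τ c ∘ g then (1 : ℂ) else 0 := by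
        rw [sum_comm]
        refine sum_congr rfl fun g _ => ?_
        simp_rw [ite_and]
        rw [sum_ite_eq' univ]
        simp
    _ = _ := by
        rw [sum_boole]
        congr 2
        ext g
        simp only [mem_filter, Fintype.mem_piFinset, mem_univ, true_and]

theorem sum_neg_one_pow_mul_trInv_permTensor_compl {N D n : ℕ}
    (σ τ : Fin D → Equiv.Perm (Fin n)) (e : Fin n ↪ Fin N) :
    ∑ T : Finset (Fin n), (-1 : ℂ) ^ #T * trInv σ (permTensor τ e Tᶜ) =
      #{π : Equiv.Perm (Fin n) | ∀ c, π * σ c = τ c * π} := by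
  have h := card_filter_surjective_eq_alternating_sum fun g : Fin n → Fin n =>
    ∀ c, g ∘ σ c = τ c ∘ g
  rw [card_filter_surjective_eq_card_perm] at h
  simp only [← Equiv.Perm.coe_mul, DFunLike.coe_fn_eq] at h
  have h' := congrArg (Int.cast : ℤ → ℂ) h
  push_cast at h'
  simp only [trInv_permTensor, mem_compl]
  rw [h']
  congr!

theorem eq_zero_of_forall_sum_mul_trInv_eq_zero {N D n : ℕ} (hn : n ≤ N)
    {lam : (Fin D → Equiv.Perm (Fin n)) → ℂ}
    (hlam : ∀ σ η, lam (fun c => η * σ c * η⁻¹) = lam σ)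
    (h : ∀ A : (Fin D → Fin N) → (Fin D → Fin N) → ℂ,
      ∑ σ : Fin D → Equiv.Perm (Fin n), lam σ * trInv σ A = 0)
    (τ : Fin D → Equiv.Perm (Fin n)) : lam τ = 0 := by
  let e := Fin.castLEEmb hn
  have hfact : (n.factorial : ℂ) * lam τ = 0 := calc
    (n.factorial : ℂ) * lam τ
      = ∑ σ, lam σ * #{π : Equiv.Perm (Fin n) | ∀ c, π * σ c = τ c * π} := by
        -- `∀ c : Fin D` is decided by `Nat.decidableForallFin` here but by
        -- `Fintype.decidableForallFintype` in the general lemma, hence `congr!`.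
        convert (sum_mul_card_filter_conj_eq_card_mul lam hlam τ).symm using 2
        · rw [Fintype.card_perm, Fintype.card_fin]
        · congr!
    _ = ∑ T : Finset (Fin n), (-1 : ℂ) ^ #T *
          ∑ σ, lam σ * trInv σ (permTensor τ e Tᶜ) := by
        simp only [← sum_neg_one_pow_mul_trInv_permTensor_compl _ τ e, mul_sum]
        rw [sum_comm]
        refine sum_congr rfl fun T _ => sum_congr rfl fun σ _ => ?_
        ring
    _ = 0 := by simp only [h, mul_zero, sum_const_zero]
  simpa [Nat.factorial_ne_zero] using hfact

theorem mixed_trace_invariants_linearly_independent_general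
    (D nmax : ℕ) :
    ∃ N₀ : ℕ, ∀ N : ℕ, N₀ ≤ N →
      ∀ lam : (n : ℕ) → (Fin D → Equiv.Perm (Fin n)) → ℂ,
        (∀ n, 1 ≤ n → n ≤ nmax →
          ∀ (σ : Fin D → Equiv.Perm (Fin n)) (η : Equiv.Perm (Fin n)),
            lam n (fun c => η * σ c * η⁻¹) = lam n σ) →
        (∀ A : (Fin D → Fin N) → (Fin D → Fin N) → ℂ,
          ∑ n ∈ Finset.Icc 1 nmax,
            ∑ σ : Fin D → Equiv.Perm (Fin n), lam n σ * trInv σ A = 0) →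
        ∀ n, 1 ≤ n → n ≤ nmax →
          ∀ σ : Fin D → Equiv.Perm (Fin n), lam n σ = 0 := by
  refine ⟨nmax, fun N hN lam hinv hzero n hn1 hn2 => ?_⟩
  exact eq_zero_of_forall_sum_mul_trInv_eq_zero (hn2.trans hN) (hinv n hn1 hn2)
    (sum_mul_trInv_eq_zero_of_sum_eq_zero hzero (mem_Icc.mpr ⟨hn1, hn2⟩))

/-- Linear independence of the mixed trace-invariants (one per
simultaneous-conjugacy class) for `N` large enough. -/
theorem mixed_trace_invariants_linearly_independent
    (D nmax : ℕ) (hD : 1 ≤ D) (hmax : 1 ≤ nmax) :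
    ∃ N₀ : ℕ, ∀ N : ℕ, N₀ ≤ N →
      ∀ lam : (n : ℕ) → (Fin D → Equiv.Perm (Fin n)) → ℂ,
        (∀ n, 1 ≤ n → n ≤ nmax →
          ∀ (σ : Fin D → Equiv.Perm (Fin n)) (η : Equiv.Perm (Fin n)),
            lam n (fun c => η * σ c * η⁻¹) = lam n σ) →
        (∀ A : (Fin D → Fin N) → (Fin D → Fin N) → ℂ,
          ∑ n ∈ Finset.Icc 1 nmax,
            ∑ σ : Fin D → Equiv.Perm (Fin n), lam n σ * trInv σ A = 0) →
        ∀ n, 1 ≤ n → n ≤ nmax →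
          ∀ σ : Fin D → Equiv.Perm (Fin n), lam n σ = 0 :=
  mixed_trace_invariants_linearly_independent_general D nmax
end

section
/- Let N ≥ 1 and let A be an N×N complex matrix which is Hermitian, such that the real part of every diagonal entry is positive ((A i i).re > 0 for all i), and such that for all i ≠ j the norm of the off-diagonal entry satisfies ‖A i j‖ ≤ Real.sqrt ((A i i).re * (A j j).re) / N. Then A is positive definite; in particular A is invertible. -/
/-!
With `vᵢ = √(Re Aᵢᵢ) ‖xᵢ‖`, the off-diagonal bound `‖Aᵢⱼ‖ ≤ c √(Re Aᵢᵢ Re Aⱼⱼ)` gives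
`Re (xᴴ A x) ≥ ∑ vᵢ² - c ∑_{i ≠ j} vᵢ vⱼ`, and Cauchy–Schwarz gives
`∑_{i ≠ j} vᵢ vⱼ = (∑ vᵢ)² - ∑ vᵢ² ≤ (N - 1) ∑ vᵢ²`. Hence `Re (xᴴ A x) ≥ (1 - c (N - 1)) ∑ vᵢ²`,
which is positive for `x ≠ 0` as soon as `c (N - 1) < 1`; the theorem is the case `c = 1 / N`.
-/

open Finset RCLike
open scoped ComplexOrder ComplexConjugate

theorem sum_sum_erase_mul_le_card_sub_one_mul_sum_sq {ι : Type*} [Fintype ι]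
    [DecidableEq ι] (v : ι → ℝ) :
    ∑ i, ∑ j ∈ univ.erase i, v i * v j ≤ (Fintype.card ι - 1) * ∑ i, v i ^ 2 := by
  have hsplit : ∀ i, ∑ j ∈ univ.erase i, v i * v j = v i * ∑ j, v j - v i ^ 2 := fun i => by
    rw [← mul_sum, ← add_sum_erase _ _ (mem_univ i)]; ring
  have hCS : (∑ i, v i) ^ 2 ≤ Fintype.card ι * ∑ i, v i ^ 2 := by
    simpa using sq_sum_le_card_mul_sum_sq (s := univ) (f := v)
  simp only [hsplit, sum_sub_distrib, ← sum_mul]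
  linarith [sq (∑ i, v i)]

namespace Matrix

variable {𝕜 n : Type*} [RCLike 𝕜] [Fintype n]

theorem IsHermitian.posDef_of_re_pos {A : Matrix n n 𝕜} (hA : A.IsHermitian)
    (hpos : ∀ x : n → 𝕜, x ≠ 0 → 0 < re (star x ⬝ᵥ A *ᵥ x)) : A.PosDef :=
  .of_dotProduct_mulVec_pos hA fun x hx =>
    pos_iff.mpr ⟨hpos x hx, hA.im_star_dotProduct_mulVec_self x⟩

theorem star_dotProduct_mulVec_eq_sum (A : Matrix n n 𝕜) (x : n → 𝕜) :
    star x ⬝ᵥ A *ᵥ x = ∑ i, ∑ j, conj (x i) * A i j * x j := by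
  simp [dotProduct, mulVec, mul_sum, mul_assoc]

theorem sum_re_mul_sq_sub_le_re_star_dotProduct_mulVec [DecidableEq n] (A : Matrix n n 𝕜)
    (x : n → 𝕜) :
    ∑ i, re (A i i) * ‖x i‖ ^ 2 - ∑ i, ∑ j ∈ univ.erase i, ‖A i j‖ * (‖x i‖ * ‖x j‖) ≤
      re (star x ⬝ᵥ A *ᵥ x) := by
  have hdiag : ∀ i, re (conj (x i) * A i i * x i) = re (A i i) * ‖x i‖ ^ 2 := fun i => by
    rw [mul_right_comm, RCLike.conj_mul, ← ofReal_pow]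
    exact (re_ofReal_mul _ _).trans (mul_comm _ _)
  have hoff : ∀ i j, -(‖A i j‖ * (‖x i‖ * ‖x j‖)) ≤ re (conj (x i) * A i j * x j) := fun i j => by
    have := neg_le_of_abs_le (abs_re_le_norm (conj (x i) * A i j * x j))
    simpa [norm_mul, mul_comm, mul_left_comm] using this
  rw [star_dotProduct_mulVec_eq_sum, map_sum, sub_eq_add_neg, ← sum_neg_distrib,
    ← sum_add_distrib]
  refine sum_le_sum fun i _ => ?_
  rw [map_sum, ← add_sum_erase _ _ (mem_univ i), hdiag, ← sum_neg_distrib]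
  exact add_le_add_right (sum_le_sum fun j _ => hoff i j) _

theorem IsHermitian.posDef_of_norm_le_mul_sqrt {A : Matrix n n 𝕜} (hA : A.IsHermitian)
    (hdiag : ∀ i, 0 < re (A i i)) {c : ℝ} (hc₀ : 0 ≤ c) (hc : c * (Fintype.card n - 1) < 1)
    (hoff : ∀ i j, i ≠ j → ‖A i j‖ ≤ c * √(re (A i i) * re (A j j))) : A.PosDef := by
  classical
  refine hA.posDef_of_re_pos fun x hx => ?_
  set v : n → ℝ := fun i => √(re (A i i)) * ‖x i‖ with hv
  have hdiag_eq : ∑ i, re (A i i) * ‖x i‖ ^ 2 = ∑ i, v i ^ 2 :=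
    sum_congr rfl fun i _ => by rw [hv, mul_pow, Real.sq_sqrt (hdiag i).le]
  have hoff_le : ∑ i, ∑ j ∈ univ.erase i, ‖A i j‖ * (‖x i‖ * ‖x j‖) ≤
      c * ∑ i, ∑ j ∈ univ.erase i, v i * v j := by
    simp only [mul_sum]
    refine sum_le_sum fun i _ => sum_le_sum fun j hj => ?_
    calc ‖A i j‖ * (‖x i‖ * ‖x j‖)
        ≤ c * √(re (A i i) * re (A j j)) * (‖x i‖ * ‖x j‖) := by
          gcongr; exact hoff i j (ne_of_mem_erase hj).symm
      _ = c * (v i * v j) := by rw [Real.sqrt_mul (hdiag i).le, hv]; ring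
  have hv_pos : 0 < ∑ i, v i ^ 2 := by
    obtain ⟨i, hi⟩ := Function.ne_iff.mp hx
    refine sum_pos' (fun j _ => sq_nonneg _) ⟨i, mem_univ i, pow_pos ?_ 2⟩
    exact mul_pos (Real.sqrt_pos.mpr (hdiag i)) (norm_pos_iff.mpr hi)
  have hcross := mul_le_mul_of_nonneg_left (sum_sum_erase_mul_le_card_sub_one_mul_sum_sq v) hc₀
  calc 0 < (1 - c * (Fintype.card n - 1)) * ∑ i, v i ^ 2 := mul_pos (by linarith) hv_pos
    _ ≤ ∑ i, v i ^ 2 - c * ∑ i, ∑ j ∈ univ.erase i, v i * v j := by linarith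
    _ ≤ _ := by
      rw [← hdiag_eq]
      exact (sub_le_sub_left hoff_le _).trans
        (sum_re_mul_sq_sub_le_re_star_dotProduct_mulVec A x)

end Matrix

open ComplexOrder in
theorem posDef_of_small_off_diagonal_general
    (N : ℕ) (A : Matrix (Fin N) (Fin N) ℂ)
    (hHerm : A.IsHermitian)
    (hdiag : ∀ i, 0 < (A i i).re)
    (hoff : ∀ i j, i ≠ j →
      ‖A i j‖ ≤ Real.sqrt ((A i i).re * (A j j).re) / N) :
    A.PosDef ∧ IsUnit A := by
  have hc : (N : ℝ)⁻¹ * (Fintype.card (Fin N) - 1) < 1 := by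
    rw [Fintype.card_fin]
    rcases N.eq_zero_or_pos with rfl | hN
    · simp
    · rw [inv_mul_lt_iff₀ (by positivity)]
      linarith
  have hPD : A.PosDef := hHerm.posDef_of_norm_le_mul_sqrt hdiag (by positivity) hc
    fun i j hij => (hoff i j hij).trans_eq (div_eq_inv_mul _ _)
  exact ⟨hPD, hPD.isUnit⟩

open ComplexOrder in
/-- A Hermitian complex matrix with positive diagonal (real parts) whose
off-diagonal entries satisfy `‖A i j‖ ≤ √((A i i).re * (A j j).re) / N` is
positive definite; in particular it is invertible. -/
theorem posDef_of_small_off_diagonal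
    (N : ℕ) (hN : 1 ≤ N) (A : Matrix (Fin N) (Fin N) ℂ)
    (hHerm : A.IsHermitian)
    (hdiag : ∀ i, 0 < (A i i).re)
    (hoff : ∀ i j, i ≠ j →
      ‖A i j‖ ≤ Real.sqrt ((A i i).re * (A j j).re) / N) :
    A.PosDef ∧ IsUnit A :=
  posDef_of_small_off_diagonal_general N A hHerm hdiag hoff
end

section
/- Let n ≥ 1, D ≥ 1 and let σ be a D-tuple of permutations of Fin n with K_p(σ) = 1 (purely connected). Then for every permutation η of Fin n one has the identity ∇(σ;η) = (D−1)·ω̄(σ;η) − ω(σ), and ∇(σ;η) ≥ 0; in particular (D−1)·ω̄(σ;η) ≥ ω(σ), with equality if and only if ∇(σ;η) = 0 (i.e. η renders σ compatible). -/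
/-- `#π`: the number of orbits of a permutation of `Fin n`
(its cycles, counting fixed points). -/
def permOrbits {n : ℕ} (π : Equiv.Perm (Fin n)) : ℕ :=
  Multiset.card π.cycleType + (Finset.univ.filter fun x => π x = x).card

/-- `|π| = n - #π`, the minimal number of transpositions whose product is `π`. -/
def permLen {n : ℕ} (π : Equiv.Perm (Fin n)) : ℕ := n - permOrbits π

/-- The bipartite graph on `Fin n ⊕ Fin n` with an edge between `inl s` and
`inr t` exactly when `t = σ_c s` for some component `σ_c` of the tuple. -/
def pairGraph {n D : ℕ} (σ : Fin D → Equiv.Perm (Fin n)) :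
    SimpleGraph ((Fin n) ⊕ (Fin n)) :=
  SimpleGraph.fromRel fun a b =>
    ∃ s t : Fin n, a = Sum.inl s ∧ b = Sum.inr t ∧ ∃ c, σ c s = t

/-- `K_p(σ)`: the number of pure connected components of `σ`. -/
noncomputable def Kp {n D : ℕ} (σ : Fin D → Equiv.Perm (Fin n)) : ℕ :=
  Nat.card (pairGraph σ).ConnectedComponent

/-- `d(σ,η) = Σ_c |σ_c η⁻¹|`. -/
def dEta {n D : ℕ} (σ : Fin D → Equiv.Perm (Fin n)) (η : Equiv.Perm (Fin n)) : ℕ :=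
  ∑ c, permLen (σ c * η⁻¹)

/-- `d(σ,τ) = Σ_c |σ_c τ_c⁻¹|`. -/
def dTuple {n D : ℕ} (σ τ : Fin D → Equiv.Perm (Fin n)) : ℕ :=
  ∑ c, permLen (σ c * (τ c)⁻¹)

/-- The degree `ω(σ) = Σ_{c₁<c₂} |σ_{c₁} σ_{c₂}⁻¹| − (D−1)(n − K_p(σ))`,
an integer. -/
noncomputable def degInv {n D : ℕ} (σ : Fin D → Equiv.Perm (Fin n)) : ℤ :=
  (∑ p ∈ Finset.univ.filter (fun p : Fin D × Fin D => p.1 < p.2),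
      (permLen (σ p.1 * (σ p.2)⁻¹) : ℤ)) -
    ((D : ℤ) - 1) * ((n : ℤ) - (Kp σ : ℤ))

/-- `ω̄(σ;η) = D·K_p(σ⌢η) − (D−1)·K_p(σ) − n + d(σ,η)`, an integer. -/
noncomputable def omegaBar {n D : ℕ} (σ : Fin D → Equiv.Perm (Fin n))
    (η : Equiv.Perm (Fin n)) : ℤ :=
  (D : ℤ) * (Kp (Fin.snoc σ η : Fin (D + 1) → Equiv.Perm (Fin n)) : ℤ) -
    ((D : ℤ) - 1) * (Kp σ : ℤ) - (n : ℤ) + (dEta σ η : ℤ)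

/-- `∇(σ;η) = Σ_{c₁<c₂} ( |σ_{c₁} η⁻¹| + |σ_{c₂} η⁻¹| − |σ_{c₁} σ_{c₂}⁻¹| )`,
an integer. -/
noncomputable def nablaInv {n D : ℕ} (σ : Fin D → Equiv.Perm (Fin n))
    (η : Equiv.Perm (Fin n)) : ℤ :=
  ∑ p ∈ Finset.univ.filter (fun p : Fin D × Fin D => p.1 < p.2),
    ((permLen (σ p.1 * η⁻¹) : ℤ) + (permLen (σ p.2 * η⁻¹) : ℤ) -
      (permLen (σ p.1 * (σ p.2)⁻¹) : ℤ))

/-!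
When `K_p(σ) = 1` the extended tuple `σ⌢η` is connected as well, so
`ω̄(σ;η) = 1 - n + d(σ,η)` and the identity is bookkeeping: every `|σ_c η⁻¹|` occurs in exactly
`D - 1` of the pairs `c₁ < c₂`. Nonnegativity is termwise the triangle inequality for the Cayley
distance `|a b⁻¹|`, i.e. subadditivity of the transposition length `|π| = n - #π`, which holds
because multiplying by a transposition changes the number of cycles by exactly one.
-/

open Equiv Finset

namespace Equiv.Perm

variable {α : Type*} [Fintype α] [DecidableEq α]

def transpositionLength (f : Perm α) : ℕ := #f.support - Multiset.card f.cycleType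

lemma two_mul_card_cycleType_le (f : Perm α) : 2 * Multiset.card f.cycleType ≤ #f.support := by
  rw [← sum_cycleType, mul_comm, ← smul_eq_mul]
  exact Multiset.card_nsmul_le_sum fun _ h => two_le_of_mem_cycleType h

@[simp]
lemma transpositionLength_one : transpositionLength (1 : Perm α) = 0 := by
  simp [transpositionLength]

@[simp]
lemma transpositionLength_inv (f : Perm α) : transpositionLength f⁻¹ = transpositionLength f := by
  simp [transpositionLength]

lemma Disjoint.transpositionLength_mul {f g : Perm α} (h : f.Disjoint g) :
    transpositionLength (f * g) = transpositionLength f + transpositionLength g := by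
  have := two_mul_card_cycleType_le f
  have := two_mul_card_cycleType_le g
  simp only [transpositionLength, h.card_support_mul, h.cycleType_mul, Multiset.card_add]
  omega

lemma IsCycle.transpositionLength_eq {c : Perm α} (hc : c.IsCycle) :
    c.transpositionLength = #c.support - 1 := by
  simp [Perm.transpositionLength, hc.cycleType]

lemma IsCycle.transpositionLength_swap_mul {c : Perm α} (hc : c.IsCycle) {x : α} (hx : c x ≠ x) :
    Perm.transpositionLength (swap x (c x) * c) + 1 = c.transpositionLength := by
  by_cases hcx : c (c x) = x
  · have hc_swap := hc.eq_swap_of_apply_apply_eq_self hx hcx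
    rw [hc.transpositionLength_eq, hc_swap, card_support_swap hx.symm]
    simp
  · have hx_mem : x ∈ c.support := mem_support.2 hx
    have := hc.two_le_card_support
    rw [(hc.swap_mul hx hcx).transpositionLength_eq, hc.transpositionLength_eq,
      support_swap_mul_eq c x hcx, sdiff_singleton_eq_erase, card_erase_of_mem hx_mem]
    omega

lemma transpositionLength_swap_mul {f : Perm α} {x : α} (hx : f x ≠ x) :
    transpositionLength (swap x (f x) * f) + 1 = transpositionLength f := by
  set c := f.cycleOf x
  have hc_mem : c ∈ f.cycleFactorsFinset :=
    cycleOf_mem_cycleFactorsFinset_iff.2 (mem_support.2 hx)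
  have hcx : c x = f x := cycleOf_apply_self f x
  have hdisj : (f * c⁻¹).Disjoint c := disjoint_mul_inv_of_mem_cycleFactorsFinset hc_mem
  have hxc : x ∈ c.support := mem_support.2 (hcx ▸ hx)
  have hswap_supp : (swap x (c x)).support ⊆ c.support := by
    rw [support_swap (mem_support.1 hxc).symm]
    exact insert_subset hxc (singleton_subset_iff.2 (apply_mem_support.2 hxc))
  have hdisj' : (swap x (c x) * c).Disjoint (f * c⁻¹) :=
    (disjoint_iff_disjoint_support.2 <|
      (disjoint_iff_disjoint_support.1 hdisj).symm.mono_left hswap_supp).mul_left hdisj.symm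
  have hf : f = c * (f * c⁻¹) := by rw [← hdisj.commute.eq]; group
  calc Perm.transpositionLength (swap x (f x) * f) + 1
      = Perm.transpositionLength (swap x (c x) * c * (f * c⁻¹)) + 1 := by
        rw [hcx, mul_assoc, ← hf]
    _ = Perm.transpositionLength (c * (f * c⁻¹)) := by
        rw [hdisj'.transpositionLength_mul, hdisj.symm.transpositionLength_mul,
          ← (f.isCycle_cycleOf hx).transpositionLength_swap_mul (hcx ▸ hx)]
        ring
    _ = f.transpositionLength := by rw [← hf]

lemma transpositionLength_swap_mul_of_apply_eq_self {f : Perm α} {u v : α} (hu : f u = u)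
    (huv : u ≠ v) : transpositionLength (swap u v * f) = f.transpositionLength + 1 := by
  have hv : (swap u v * f) u = v := by simp [hu]
  have hne : (swap u v * f) u ≠ u := by rw [hv]; exact huv.symm
  have := transpositionLength_swap_mul hne
  rwa [hv, swap_mul_self_mul, eq_comm] at this

lemma transpositionLength_swap_mul_le (f : Perm α) {u v : α} (huv : u ≠ v) :
    transpositionLength (swap u v * f) ≤ f.transpositionLength + 1 := by
  induction hN : f.transpositionLength using Nat.strong_induction_on generalizing f u v with
  | _ N ih =>
  by_cases hu : f u = u
  · exact (transpositionLength_swap_mul_of_apply_eq_self hu huv).le.trans_eq (by rw [hN])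
  by_cases hv : f u = v
  · have := transpositionLength_swap_mul hu
    rw [hv] at this
    omega
  -- Peel `swap u w` off `f` and commute it past `swap u v`, turning that into `swap w v`.
  set w := f u
  set g := swap u w * f
  have hg : g.transpositionLength + 1 = f.transpositionLength := transpositionLength_swap_mul hu
  have hgu : g u = u := by simp [g, w]
  have hf : f = swap u w * g := (swap_mul_self_mul u w f).symm
  have hswaps : swap u v * swap u w = swap u w * swap w v := by
    rw [swap_mul_eq_mul_swap, swap_inv, swap_apply_left,
      swap_apply_of_ne_of_ne huv.symm (Ne.symm hv)]
  calc transpositionLength (swap u v * f)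
      = transpositionLength (swap u w * (swap w v * g)) := by
        rw [hf, ← mul_assoc, hswaps, mul_assoc]
    _ = transpositionLength (swap w v * g) + 1 :=
        transpositionLength_swap_mul_of_apply_eq_self
          (by rw [mul_apply, hgu, swap_apply_of_ne_of_ne (Ne.symm hu) huv]) (Ne.symm hu)
    _ ≤ g.transpositionLength + 1 + 1 := by
        gcongr
        exact ih _ (by omega) g hv rfl
    _ = N + 1 := by omega

lemma transpositionLength_mul_le (f g : Perm α) :
    transpositionLength (f * g) ≤ f.transpositionLength + g.transpositionLength := by
  induction hN : f.transpositionLength using Nat.strong_induction_on generalizing f with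
  | _ N ih =>
  by_cases hf : f = 1
  · simp [hf, ← hN]
  obtain ⟨x, hx⟩ : ∃ x, f x ≠ x := not_forall.1 fun h => hf (Equiv.ext h)
  have hlen := transpositionLength_swap_mul hx
  calc transpositionLength (f * g)
      = transpositionLength (swap x (f x) * (swap x (f x) * f * g)) := by
        rw [← mul_assoc, ← mul_assoc, swap_mul_self, one_mul]
    _ ≤ transpositionLength (swap x (f x) * f * g) + 1 :=
        transpositionLength_swap_mul_le _ (Ne.symm hx)
    _ ≤ transpositionLength (swap x (f x) * f) + g.transpositionLength + 1 := by
        gcongr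
        exact ih _ (by omega) _ rfl
    _ = N + g.transpositionLength := by omega

end Equiv.Perm

lemma permLen_eq_transpositionLength {n : ℕ} (π : Perm (Fin n)) :
    permLen π = π.transpositionLength := by
  have hfix : (univ.filter fun x => π x = x) = π.supportᶜ := by
    ext; simp [Perm.mem_support]
  have := π.two_mul_card_cycleType_le
  have := card_le_univ π.support
  rw [permLen, permOrbits, hfix, card_compl, Perm.transpositionLength]
  simp only [Fintype.card_fin] at *
  omega

lemma permLen_mul_inv_le {n : ℕ} (a b c : Perm (Fin n)) :
    permLen (a * b⁻¹) ≤ permLen (a * c⁻¹) + permLen (b * c⁻¹) := by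
  simp only [permLen_eq_transpositionLength]
  calc Perm.transpositionLength (a * b⁻¹)
      = Perm.transpositionLength (a * c⁻¹ * (b * c⁻¹)⁻¹) := by group
    _ ≤ Perm.transpositionLength (a * c⁻¹) + Perm.transpositionLength (b * c⁻¹)⁻¹ :=
      Perm.transpositionLength_mul_le _ _
    _ = _ := by rw [Perm.transpositionLength_inv]

lemma sum_filter_lt_add {ι R : Type*} [Fintype ι] [LinearOrder ι] [CommRing R] (F : ι → R) :
    ∑ p ∈ univ.filter (fun p : ι × ι => p.1 < p.2), (F p.1 + F p.2) =
      ((Fintype.card ι : R) - 1) * ∑ i, F i := by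
  calc ∑ p ∈ univ.filter (fun p : ι × ι => p.1 < p.2), (F p.1 + F p.2)
      = ∑ p ∈ univ.filter (fun p : ι × ι => p.1 < p.2), F p.1 +
          ∑ p ∈ univ.filter (fun p : ι × ι => p.2 < p.1), F p.1 := by
        rw [sum_add_distrib]
        congr 1
        exact sum_equiv (Equiv.prodComm ι ι) (by simp) (by simp)
    _ = ∑ p ∈ univ.filter (fun p : ι × ι => p.1 ≠ p.2), F p.1 := by
        rw [← sum_union (disjoint_filter.2 fun p _ h => h.not_gt)]
        congr 1
        ext p
        simp [lt_or_lt_iff_ne]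
    _ = ∑ i, ∑ j ∈ univ.erase i, F i := by
        rw [sum_filter, Fintype.sum_prod_type]
        simp [sum_ite, filter_ne]
    _ = ((Fintype.card ι : R) - 1) * ∑ i, F i := by
        rw [mul_sum]
        refine sum_congr rfl fun i _ => ?_
        rw [sum_const, card_erase_of_mem (mem_univ i), card_univ, nsmul_eq_mul,
          Nat.cast_pred (Fintype.card_pos_iff.2 ⟨i⟩)]

lemma pairGraph_le_snoc {n D : ℕ} (σ : Fin D → Perm (Fin n)) (η : Perm (Fin n)) :
    pairGraph σ ≤ pairGraph (Fin.snoc σ η : Fin (D + 1) → Perm (Fin n)) := by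
  intro a b hab
  simp only [pairGraph, SimpleGraph.fromRel_adj] at hab ⊢
  refine ⟨hab.1, hab.2.imp ?_ ?_⟩ <;>
  · rintro ⟨s, t, rfl, rfl, c, hc⟩
    exact ⟨s, t, rfl, rfl, c.castSucc, by rwa [Fin.snoc_castSucc]⟩

lemma Kp_snoc_eq_one {n D : ℕ} {σ : Fin D → Perm (Fin n)} (hK : Kp σ = 1)
    (η : Perm (Fin n)) : Kp (Fin.snoc σ η : Fin (D + 1) → Perm (Fin n)) = 1 := by
  have : Nonempty (Fin n ⊕ Fin n) := by
    obtain ⟨c⟩ := (Nat.card_eq_one_iff_unique.1 hK).2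
    exact ⟨c.out⟩
  exact le_antisymm
    ((SimpleGraph.ConnectedComponent.card_le_card_of_le (pairGraph_le_snoc σ η)).trans_eq hK)
    Nat.card_pos

lemma nablaInv_eq {n D : ℕ} (σ : Fin D → Perm (Fin n)) (η : Perm (Fin n)) :
    nablaInv σ η = ((D : ℤ) - 1) * dEta σ η -
      ∑ p ∈ univ.filter (fun p : Fin D × Fin D => p.1 < p.2),
        (permLen (σ p.1 * (σ p.2)⁻¹) : ℤ) := by
  rw [nablaInv, sum_sub_distrib, sum_filter_lt_add fun c => (permLen (σ c * η⁻¹) : ℤ),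
    Fintype.card_fin, dEta]
  push_cast
  rfl

lemma nablaInv_nonneg {n D : ℕ} (σ : Fin D → Perm (Fin n)) (η : Perm (Fin n)) :
    0 ≤ nablaInv σ η :=
  sum_nonneg fun p _ => by
    have := permLen_mul_inv_le (σ p.1) (σ p.2) η
    omega

theorem nabla_eq_and_nonneg_general
    (n D : ℕ)
    (σ : Fin D → Equiv.Perm (Fin n)) (hK : Kp σ = 1) :
    ∀ η : Equiv.Perm (Fin n),
      nablaInv σ η = ((D : ℤ) - 1) * omegaBar σ η - degInv σ ∧
        0 ≤ nablaInv σ η ∧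
        degInv σ ≤ ((D : ℤ) - 1) * omegaBar σ η ∧
        (degInv σ = ((D : ℤ) - 1) * omegaBar σ η ↔ nablaInv σ η = 0) := by
  intro η
  have h_eq : nablaInv σ η = ((D : ℤ) - 1) * omegaBar σ η - degInv σ := by
    rw [nablaInv_eq, omegaBar, degInv, Kp_snoc_eq_one hK, hK]
    push_cast
    ring
  have h_nonneg := nablaInv_nonneg σ η
  exact ⟨h_eq, h_nonneg, by linarith, by constructor <;> intro h <;> linarith⟩

/-- For a purely connected tuple `σ` and any `η`:
`∇(σ;η) = (D−1)·ω̄(σ;η) − ω(σ)` and `∇(σ;η) ≥ 0`; in particular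
`(D−1)·ω̄(σ;η) ≥ ω(σ)`, with equality iff `∇(σ;η) = 0`. -/
theorem nabla_eq_and_nonneg
    (n D : ℕ) (hn : 1 ≤ n) (hD : 1 ≤ D)
    (σ : Fin D → Equiv.Perm (Fin n)) (hK : Kp σ = 1) :
    ∀ η : Equiv.Perm (Fin n),
      nablaInv σ η = ((D : ℤ) - 1) * omegaBar σ η - degInv σ ∧
        0 ≤ nablaInv σ η ∧
        degInv σ ≤ ((D : ℤ) - 1) * omegaBar σ η ∧
        (degInv σ = ((D : ℤ) - 1) * omegaBar σ η ↔ nablaInv σ η = 0) :=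
  nabla_eq_and_nonneg_general n D σ hK
end

section
/- Let n ≥ 1, D ≥ 1 and let σ, τ be D-tuples of permutations of Fin n. Then K_p(σ⌢τ) + d(σ,τ) ≥ K_p(τ), i.e. the quantity C(σ;τ) := K_p(σ⌢τ) − K_p(τ) + d(σ,τ) is a non-negative integer; moreover C(σ;σ) = 0, i.e. K_p(σ⌢σ) = K_p(σ). -/
/-!
In the pair graph of `σ⌢τ`, the vertex `inl s` is joined both to `inr (τ_c s)` and to
`inr (σ_c s)`. Up to reachability, adding the colours of `σ` to the pair graph of `τ` therefore
amounts to joining `inr t` to `inr (σ_c τ_c⁻¹ t)` for every `t` and `c`. For a single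
permutation `π`, all points of a `k`-cycle are already joined by a star of `k - 1` edges, so
these joins cost at most `|π|` edges, and every edge lowers the number of components by at
most one. Summing over the colours gives `K_p(τ) ≤ K_p(σ⌢τ) + d(σ,τ)`. The pair graph of `σ⌢σ`
has the same edges as that of `σ`.
-/

namespace SimpleGraph

variable {V : Type*} {G H : SimpleGraph V}

theorem Reachable.of_forall_adj_reachable (h : ∀ a b, H.Adj a b → G.Reachable a b) {u v : V}
    (huv : H.Reachable u v) : G.Reachable u v := by
  obtain ⟨p⟩ := huv
  induction p with
  | nil => rfl
  | cons hadj _ ih => exact (h _ _ hadj).trans ih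

theorem card_connectedComponent_le_of_forall_adj_reachable [Finite V]
    (h : ∀ a b, H.Adj a b → G.Reachable a b) :
    Nat.card G.ConnectedComponent ≤ Nat.card H.ConnectedComponent :=
  Nat.card_le_card_of_surjective (Quot.map id fun _ _ => Reachable.of_forall_adj_reachable h)
    (by rintro ⟨v⟩; exact ⟨Quot.mk _ v, rfl⟩)

theorem reachable_edge (u v : V) : (edge u v).Reachable u v := by
  by_cases huv : u = v
  · rw [huv]
  · exact Adj.reachable ((edge_adj ..).2 ⟨Or.inl ⟨rfl, rfl⟩, huv⟩)

theorem connectedComponentMk_eq_or_of_reachable_sup_edge {u v a b : V}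
    (h : (G ⊔ edge u v).Reachable a b) :
    G.connectedComponentMk a = G.connectedComponentMk b ∨
      (G.connectedComponentMk a = G.connectedComponentMk u ∧
        G.connectedComponentMk v = G.connectedComponentMk b) ∨
      (G.connectedComponentMk a = G.connectedComponentMk v ∧
        G.connectedComponentMk u = G.connectedComponentMk b) := by
  obtain ⟨p⟩ := h
  induction p with
  | nil => exact Or.inl rfl
  | cons hadj _ ih =>
    rcases hadj with hadj | hadj
    · rwa [ConnectedComponent.eq.2 hadj.reachable]
    · rw [edge_adj] at hadj
      grind

/-- The map on components is injective away from the component of `u`, which is the only one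
that can be merged with another. -/
theorem card_connectedComponent_le_sup_edge_add_one [Finite V] (G : SimpleGraph V) (u v : V) :
    Nat.card G.ConnectedComponent ≤ Nat.card (G ⊔ edge u v).ConnectedComponent + 1 := by
  classical
  let φ := ConnectedComponent.map (Hom.ofLE (le_sup_left : G ≤ G ⊔ edge u v))
  let ψ : G.ConnectedComponent → Option (G ⊔ edge u v).ConnectedComponent := fun C =>
    if C = G.connectedComponentMk u then none else some (φ C)
  suffices Function.Injective ψ from
    (Nat.card_le_card_of_injective ψ this).trans_eq Finite.card_option
  intro C C' hCC'
  induction C using ConnectedComponent.ind with | h a => ?_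
  induction C' using ConnectedComponent.ind with | h b => ?_
  simp only [ψ] at hCC'
  split_ifs at hCC' with ha hb hb
  · exact ha.trans hb.symm
  · simp only [Option.some_inj, φ, ConnectedComponent.map_mk, Hom.coe_ofLE, id] at hCC'
    have := connectedComponentMk_eq_or_of_reachable_sup_edge (ConnectedComponent.exact hCC')
    grind

theorem card_connectedComponent_le_sup_biSup_add [Finite V] {ι : Type*}
    (K : ι → SimpleGraph V) (k : ι → ℕ)
    (hK : ∀ (G : SimpleGraph V) i,
      Nat.card G.ConnectedComponent ≤ Nat.card (G ⊔ K i).ConnectedComponent + k i)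
    (G : SimpleGraph V) (s : Finset ι) :
    Nat.card G.ConnectedComponent ≤
      Nat.card (G ⊔ ⨆ i ∈ s, K i).ConnectedComponent + ∑ i ∈ s, k i := by
  classical
  induction s using Finset.induction_on with
  | empty => simp
  | insert i s hi ih =>
    have := hK (G ⊔ ⨆ i ∈ s, K i) i
    rw [Finset.iSup_insert, Finset.sum_insert hi, sup_left_comm, sup_comm (K i)]
    omega

theorem card_connectedComponent_le_sup_star_add [Finite V] (G : SimpleGraph V) (x : V)
    (s : Finset V) :
    Nat.card G.ConnectedComponent ≤
      Nat.card (G ⊔ ⨆ y ∈ s, edge x y).ConnectedComponent + s.card := by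
  simpa using card_connectedComponent_le_sup_biSup_add (edge x) 1
    (fun G y => card_connectedComponent_le_sup_edge_add_one G x y) G s

def permGraph {α : Type*} (f : α → V) (π : Equiv.Perm α) : SimpleGraph V :=
  ⨆ t, edge (f t) (f (π t))

section permGraph

variable {α : Type*} (f : α → V)

theorem permGraph_reachable_apply (π : Equiv.Perm α) (t : α) :
    (permGraph f π).Reachable (f t) (f (π t)) :=
  (reachable_edge _ _).mono (le_iSup (fun t => edge (f t) (f (π t))) t)

@[simp]
theorem permGraph_one : permGraph f 1 = ⊥ := by
  simp [permGraph, edge_self_eq_bot]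

theorem permGraph_mul_le_of_disjoint {σ τ : Equiv.Perm α} (h : σ.Disjoint τ) :
    permGraph f (σ * τ) ≤ permGraph f σ ⊔ permGraph f τ := by
  refine iSup_le fun t => ?_
  by_cases hτ : τ t = t
  · rw [Equiv.Perm.mul_apply, hτ]
    exact (le_iSup (fun t => edge (f t) (f (σ t))) t).trans le_sup_left
  · have hσ : σ (τ t) = τ t := (h (τ t)).resolve_right fun h' => hτ (τ.injective h')
    rw [Equiv.Perm.mul_apply, hσ]
    exact (le_iSup (fun t => edge (f t) (f (τ t))) t).trans le_sup_right

variable [Fintype α] [DecidableEq α]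

/-- A star centred at a point of the cycle already connects the whole support. -/
theorem _root_.Equiv.Perm.IsCycle.card_connectedComponent_add_one_le [Finite V]
    {c : Equiv.Perm α} (hc : c.IsCycle) (G : SimpleGraph V) :
    Nat.card G.ConnectedComponent + 1 ≤
      Nat.card (G ⊔ permGraph f c).ConnectedComponent + c.support.card := by
  classical
  obtain ⟨x, hx, -⟩ := hc
  have hxc : x ∈ c.support := Equiv.Perm.mem_support.2 hx
  let S := (c.support.erase x).image f
  let star := G ⊔ ⨆ y ∈ S, edge (f x) y
  have hS : S.card + 1 ≤ c.support.card := by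
    have h₁ : S.card ≤ (c.support.erase x).card := Finset.card_image_le
    have h₂ := Finset.card_pos.2 ⟨x, hxc⟩
    rw [Finset.card_erase_of_mem hxc] at h₁
    omega
  have hreach : ∀ y ∈ c.support, star.Reachable (f x) (f y) := by
    intro y hy
    by_cases hxy : y = x
    · rw [hxy]
    · have hyS : f y ∈ S := Finset.mem_image_of_mem f (Finset.mem_erase.2 ⟨hxy, hy⟩)
      exact (reachable_edge _ _).mono
        (le_sup_of_le_right (le_iSup₂_of_le (f := fun y (_ : y ∈ S) => edge (f x) y) _ hyS le_rfl))
  have hstar : Nat.card star.ConnectedComponent ≤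
      Nat.card (G ⊔ permGraph f c).ConnectedComponent := by
    refine card_connectedComponent_le_of_forall_adj_reachable ?_
    rintro a b (hab | hab)
    · exact hab.reachable.mono le_sup_left
    · simp only [permGraph, iSup_adj, edge_adj] at hab
      obtain ⟨t, ⟨rfl, rfl⟩ | ⟨rfl, rfl⟩, hne⟩ := hab
      all_goals
        have ht : c t ≠ t := fun h => hne (by rw [h])
        have h₁ := hreach t (Equiv.Perm.mem_support.2 ht)
        have h₂ := hreach (c t) (Equiv.Perm.apply_mem_support.2 (Equiv.Perm.mem_support.2 ht))
      exacts [h₁.symm.trans h₂, h₂.symm.trans h₁]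
  have h₁ : Nat.card G.ConnectedComponent ≤ Nat.card star.ConnectedComponent + S.card :=
    card_connectedComponent_le_sup_star_add G (f x) S
  omega

theorem card_connectedComponent_add_card_cycleType_le [Finite V] (π : Equiv.Perm α)
    (G : SimpleGraph V) :
    Nat.card G.ConnectedComponent + Multiset.card π.cycleType ≤
      Nat.card (G ⊔ permGraph f π).ConnectedComponent + π.support.card := by
  induction π using Equiv.Perm.cycle_induction_on generalizing G with
  | base_one => simp
  | base_cycles c hc => simpa [hc.cycleType] using hc.card_connectedComponent_add_one_le f G
  | induction_disjoint σ τ hστ _ hσ hτ =>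
    have hle : G ⊔ permGraph f (σ * τ) ≤ G ⊔ permGraph f σ ⊔ permGraph f τ := by
      rw [sup_assoc]
      exact sup_le_sup_left (permGraph_mul_le_of_disjoint f hστ) G
    have := ConnectedComponent.card_le_card_of_le hle
    have := hσ G
    have := hτ (G ⊔ permGraph f σ)
    rw [hστ.cycleType_mul, Multiset.card_add, hστ.card_support_mul]
    omega

end permGraph

end SimpleGraph

open SimpleGraph

section permLen

variable {n : ℕ}

theorem permLen_add_card_cycleType (π : Equiv.Perm (Fin n)) :
    permLen π + Multiset.card π.cycleType = π.support.card := by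
  have hfix : (Finset.univ.filter fun x => π x = x).card + π.support.card = n := by
    rw [Equiv.Perm.support, Finset.card_filter_add_card_filter_not]
    simp
  have hcycles : Multiset.card π.cycleType * 2 ≤ π.support.card := by
    rw [← Equiv.Perm.sum_cycleType, ← smul_eq_mul]
    exact Multiset.card_nsmul_le_sum fun _ => Equiv.Perm.two_le_of_mem_cycleType
  unfold permLen permOrbits
  omega

@[simp]
theorem permLen_one : permLen (1 : Equiv.Perm (Fin n)) = 0 := by
  simp [permLen, permOrbits]

theorem card_connectedComponent_le_sup_permGraph_add_permLen {V : Type*} [Finite V]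
    (G : SimpleGraph V) (f : Fin n → V) (π : Equiv.Perm (Fin n)) :
    Nat.card G.ConnectedComponent ≤
      Nat.card (G ⊔ permGraph f π).ConnectedComponent + permLen π := by
  have := card_connectedComponent_add_card_cycleType_le f π G
  have := permLen_add_card_cycleType π
  omega

end permLen

section pairGraph

variable {n D D' : ℕ}

theorem pairGraph_reachable_inl_inr (σ : Fin D → Equiv.Perm (Fin n)) (c : Fin D) (s : Fin n) :
    (pairGraph σ).Reachable (.inl s) (.inr (σ c s)) :=
  Adj.reachable ⟨Sum.inl_ne_inr, Or.inl ⟨s, _, rfl, rfl, c, rfl⟩⟩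

theorem card_connectedComponent_le_Kp {σ : Fin D → Equiv.Perm (Fin n)}
    {G : SimpleGraph (Fin n ⊕ Fin n)} (h : ∀ c s, G.Reachable (.inl s) (.inr (σ c s))) :
    Nat.card G.ConnectedComponent ≤ Kp σ := by
  refine card_connectedComponent_le_of_forall_adj_reachable fun a b hab => ?_
  simp only [pairGraph, fromRel_adj] at hab
  obtain ⟨-, ⟨s, t, rfl, rfl, c, rfl⟩ | ⟨s, t, rfl, rfl, c, rfl⟩⟩ := hab
  exacts [h c s, (h c s).symm]

theorem Kp_le_Kp_of_forall_exists_eq {σ : Fin D → Equiv.Perm (Fin n)}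
    {σ' : Fin D' → Equiv.Perm (Fin n)} (h : ∀ c, ∃ c', σ c = σ' c') : Kp σ' ≤ Kp σ :=
  card_connectedComponent_le_Kp fun c s => by
    obtain ⟨c', hc'⟩ := h c
    rw [hc']
    exact pairGraph_reachable_inl_inr σ' c' s

theorem Kp_append_self (σ : Fin D → Equiv.Perm (Fin n)) : Kp (Fin.append σ σ) = Kp σ := by
  refine le_antisymm (Kp_le_Kp_of_forall_exists_eq fun c => ⟨Fin.castAdd D c, ?_⟩)
    (Kp_le_Kp_of_forall_exists_eq fun c => ?_)
  · exact (Fin.append_left σ σ c).symm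
  · refine Fin.addCases (fun c => ?_) (fun c => ?_) c
    exacts [⟨c, Fin.append_left σ σ c⟩, ⟨c, Fin.append_right σ σ c⟩]

theorem Kp_le_Kp_append_add_dTuple (σ τ : Fin D → Equiv.Perm (Fin n)) :
    Kp τ ≤ Kp (Fin.append σ τ) + dTuple σ τ := by
  let P := fun c => permGraph (Sum.inr : Fin n → Fin n ⊕ Fin n) (σ c * (τ c)⁻¹)
  have hmerge := card_connectedComponent_le_sup_biSup_add P (fun c => permLen (σ c * (τ c)⁻¹))
    (fun G c => card_connectedComponent_le_sup_permGraph_add_permLen G _ _)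
    (pairGraph τ) Finset.univ
  have hτ : ∀ c s, (pairGraph τ ⊔ ⨆ c ∈ Finset.univ, P c).Reachable (.inl s) (.inr (τ c s)) :=
    fun c s => (pairGraph_reachable_inl_inr τ c s).mono le_sup_left
  have hreach : Nat.card (pairGraph τ ⊔ ⨆ c ∈ Finset.univ, P c).ConnectedComponent ≤
      Kp (Fin.append σ τ) := by
    refine card_connectedComponent_le_Kp (Fin.addCases (fun c s => ?_) (fun c s => ?_))
    · have hP : (P c).Reachable (.inr (τ c s)) (.inr (σ c s)) := by
        simpa using permGraph_reachable_apply Sum.inr (σ c * (τ c)⁻¹) (τ c s)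
      rw [Fin.append_left]
      exact (hτ c s).trans
        (hP.mono (le_sup_of_le_right (le_iSup₂_of_le c (Finset.mem_univ c) le_rfl)))
    · rw [Fin.append_right]
      exact hτ c s
  exact hmerge.trans (Nat.add_le_add_right hreach _)

end pairGraph

theorem C_nonneg_and_C_self_eq_zero_general
    (n D : ℕ)
    (σ τ : Fin D → Equiv.Perm (Fin n)) :
    (0 ≤ (Kp (Fin.append σ τ : Fin (D + D) → Equiv.Perm (Fin n)) : ℤ) -
        (Kp τ : ℤ) + (dTuple σ τ : ℤ)) ∧
      ((Kp (Fin.append σ σ : Fin (D + D) → Equiv.Perm (Fin n)) : ℤ) -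
        (Kp σ : ℤ) + (dTuple σ σ : ℤ) = 0) ∧
      Kp (Fin.append σ σ : Fin (D + D) → Equiv.Perm (Fin n)) = Kp σ := by
  have hdist : dTuple σ σ = 0 := by simp [dTuple]
  have := Kp_le_Kp_append_add_dTuple σ τ
  have := Kp_append_self σ
  exact ⟨by omega, by omega, this⟩

/-- `C(σ;τ) := K_p(σ⌢τ) − K_p(τ) + d(σ,τ)` is a non-negative integer, and
`C(σ;σ) = 0`, i.e. `K_p(σ⌢σ) = K_p(σ)`. -/
theorem C_nonneg_and_C_self_eq_zero
    (n D : ℕ) (hn : 1 ≤ n) (hD : 1 ≤ D)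
    (σ τ : Fin D → Equiv.Perm (Fin n)) :
    (0 ≤ (Kp (Fin.append σ τ : Fin (D + D) → Equiv.Perm (Fin n)) : ℤ) -
        (Kp τ : ℤ) + (dTuple σ τ : ℤ)) ∧
      ((Kp (Fin.append σ σ : Fin (D + D) → Equiv.Perm (Fin n)) : ℤ) -
        (Kp σ : ℤ) + (dTuple σ σ : ℤ) = 0) ∧
      Kp (Fin.append σ σ : Fin (D + D) → Equiv.Perm (Fin n)) = Kp σ :=
  C_nonneg_and_C_self_eq_zero_general n D σ τ
end

section
/- Let n ≥ 1, D ≥ 3, let σ, τ be D-tuples of permutations of Fin n and let η be a permutation of Fin n. Assume K_p(σ) = 1 and ω̄(σ;η) = 0 (σ is purely connected and melonic with canonical pairing η). If τ_c η⁻¹ ⪯ σ_c η⁻¹ for every c ∈ {1,…,D}, then: ω̄(τ;η) = 0, K_p(τ⌢η) = K_p(τ) (every pure connected component of τ is preserved by the pairing η), and K_p(σ⌢τ) + d(σ,τ) = K_p(τ). -/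
/-- `α ⪯ β`: the permutation `α` lies on a geodesic from the identity to `β`,
i.e. `|α| + |α β⁻¹| = |β|`. -/
def geodesicLe {n : ℕ} (α β : Equiv.Perm (Fin n)) : Prop :=
  permLen α + permLen (α * β⁻¹) = permLen β

/-!
`K_p` is 1-Lipschitz for the distance `d`: replacing `ρ_c` by `(u v) ρ_c` changes the pure
graph by edges whose endpoints are already joined once the single edge `inr u — inr v` is
added, so the number of components drops by at most one, and `d(ρ,σ)` such steps lead from `ρ`
to `σ`. Hence `K_p(τ) ≤ K_p(σ) + d(τ,σ) = 1 + d(τ,σ)` and, comparing `τ⌢η` with the constant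
tuple `(η,…,η)` (which has `n` components), `n ≤ K_p(τ⌢η) + d(τ,η)`. The geodesic condition
splits `d(σ,η) = d(τ,η) + d(τ,σ)`, and melonicity of the connected `σ` says `d(σ,η) = n - 1`,
so every inequality in `n ≤ K_p(τ⌢η) + d(τ,η) ≤ K_p(τ) + d(τ,η) ≤ n` is an equality. The last
claim then follows from `K_p(σ⌢τ) = 1`, as `σ` alone is already connected.
-/

open Equiv Equiv.Perm

section Permutations

variable {n : ℕ}

theorem card_filter_apply_eq_self (g : Perm (Fin n)) :
    (Finset.univ.filter fun x => g x = x).card = n - g.support.card := by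
  have : (Finset.univ.filter fun x => g x = x) = g.supportᶜ := by ext; simp
  rw [this, Finset.card_compl, Fintype.card_fin]

theorem two_mul_card_cycleType_le_card_support (g : Perm (Fin n)) :
    2 * Multiset.card g.cycleType ≤ g.support.card := by
  rw [← sum_cycleType, mul_comm, ← smul_eq_mul]
  exact Multiset.card_nsmul_le_sum fun _ => two_le_of_mem_cycleType

theorem permLen_eq_card_support_sub (g : Perm (Fin n)) :
    permLen g = g.support.card - Multiset.card g.cycleType := by
  have := Finset.card_le_univ g.support
  rw [Fintype.card_fin] at this
  rw [permLen, permOrbits, card_filter_apply_eq_self]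
  omega

theorem permLen_eq_zero_iff {g : Perm (Fin n)} : permLen g = 0 ↔ g = 1 := by
  refine ⟨fun h => ?_, fun h => by simp [h, permLen_eq_card_support_sub]⟩
  by_contra hg
  have := two_mul_card_cycleType_le_card_support g
  have := card_cycleType_pos.mpr hg
  rw [permLen_eq_card_support_sub] at h
  omega

theorem permLen_inv (g : Perm (Fin n)) : permLen g⁻¹ = permLen g := by
  rw [permLen_eq_card_support_sub, permLen_eq_card_support_sub, cycleType_inv,
    support_inv]

theorem permLen_mul_inv_comm (g h : Perm (Fin n)) :
    permLen (g * h⁻¹) = permLen (h * g⁻¹) := by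
  rw [← permLen_inv, mul_inv_rev, inv_inv]

theorem Equiv.Perm.Disjoint.permLen_mul {f g : Perm (Fin n)} (h : f.Disjoint g) :
    permLen (f * g) = permLen f + permLen g := by
  have := two_mul_card_cycleType_le_card_support f
  have := two_mul_card_cycleType_le_card_support g
  simp only [permLen_eq_card_support_sub, h.cycleType_mul, h.card_support_mul, Multiset.card_add]
  omega

theorem Equiv.Perm.IsCycle.permLen_eq {c : Perm (Fin n)} (hc : c.IsCycle) :
    permLen c = c.support.card - 1 := by
  rw [permLen_eq_card_support_sub, hc.cycleType, Multiset.card_singleton]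

theorem Equiv.Perm.IsCycle.permLen_swap_mul {c : Perm (Fin n)} (hc : c.IsCycle) {x : Fin n}
    (hx : x ∈ c.support) : permLen (swap x (c x) * c) + 1 = permLen c := by
  have hcx : c x ≠ x := mem_support.mp hx
  by_cases hccx : c (c x) = x
  · have hsw := hc.eq_swap_of_apply_apply_eq_self hcx hccx
    have hcard : c.support.card = 2 := by rw [hsw]; exact card_support_swap hcx.symm
    rw [hc.permLen_eq, hcard]
    nth_rw 2 [hsw]
    simp [permLen_eq_card_support_sub]
  · have h2 := hc.two_le_card_support
    rw [(hc.swap_mul hcx hccx).permLen_eq, support_swap_mul_eq c x hccx, hc.permLen_eq,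
      Finset.card_sdiff_of_subset (by simpa using hx)]
    simp only [Finset.card_singleton]
    omega

theorem Equiv.Perm.Disjoint.permLen_swap_mul_mul {σ τ : Perm (Fin n)} (hd : σ.Disjoint τ)
    {x : Fin n} (hx : x ∈ σ.support) (hσ : permLen (swap x (σ x) * σ) + 1 = permLen σ) :
    permLen (swap x ((σ * τ) x) * (σ * τ)) + 1 = permLen (σ * τ) := by
  have hτx : τ x = x := notMem_support.mp (hd.mem_imp hx)
  have hd' : (swap x (σ x) * σ).Disjoint τ :=
    hd.mono (fun _ hy => (mem_support_swap_mul_imp_mem_support_ne hy).1) le_rfl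
  rw [mul_apply, hτx, ← mul_assoc, hd'.permLen_mul, hd.permLen_mul, ← hσ]
  ring

theorem permLen_swap_mul_apply {g : Perm (Fin n)} {x : Fin n} (hx : x ∈ g.support) :
    permLen (swap x (g x) * g) + 1 = permLen g := by
  induction g using cycle_induction_on generalizing x with
  | base_one => simp at hx
  | base_cycles c hc => exact hc.permLen_swap_mul hx
  | induction_disjoint σ τ hd _ hσ hτ =>
    rcases Finset.mem_union.mp (hd.support_mul ▸ hx) with hx | hx
    · exact hd.permLen_swap_mul_mul hx (hσ hx)
    · rw [hd.commute.eq]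
      exact hd.symm.permLen_swap_mul_mul hx (hτ hx)

theorem exists_permLen_swap_mul {g : Perm (Fin n)} (hg : g ≠ 1) :
    ∃ u v, permLen (swap u v * g) + 1 = permLen g := by
  obtain ⟨x, hx⟩ := Finset.nonempty_iff_ne_empty.mpr (support_eq_empty_iff.not.mpr hg)
  exact ⟨x, g x, permLen_swap_mul_apply hx⟩

end Permutations

namespace SimpleGraph

variable {V : Type*} {G H : SimpleGraph V}

theorem reachable_le_reachable_of_adj_le (h : H.Adj ≤ G.Reachable) :
    H.Reachable ≤ G.Reachable := by
  simp only [reachable_eq_reflTransGen] at h ⊢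
  exact Relation.reflTransGen_closed h

theorem card_connectedComponent_le_of_adj_le_reachable [Finite V] (h : H.Adj ≤ G.Reachable) :
    Nat.card G.ConnectedComponent ≤ Nat.card H.ConnectedComponent := by
  refine Nat.card_le_card_of_surjective
    (ConnectedComponent.lift G.connectedComponentMk fun v w p _ =>
      ConnectedComponent.sound (reachable_le_reachable_of_adj_le h v w p.reachable)) ?_
  intro C
  induction C using ConnectedComponent.ind with | _ v => exact ⟨H.connectedComponentMk v, rfl⟩

theorem card_connectedComponent_eq_one_of_le [Finite V] (hle : G ≤ H)
    (hG : Nat.card G.ConnectedComponent = 1) : Nat.card H.ConnectedComponent = 1 := by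
  obtain ⟨C⟩ := (Nat.card_pos_iff.mp (by omega : 0 < Nat.card G.ConnectedComponent)).1
  obtain ⟨v, -⟩ := C.exists_rep
  have : Nonempty H.ConnectedComponent := ⟨H.connectedComponentMk v⟩
  have := ConnectedComponent.card_le_card_of_le hle
  have := Nat.card_pos (α := H.ConnectedComponent)
  omega

theorem Reachable.of_sup_edge {a b x y : V} (h : (G ⊔ edge a b).Reachable x y) :
    G.Reachable x y ∨ (G.Reachable x a ∧ G.Reachable b y) ∨
      (G.Reachable x b ∧ G.Reachable a y) := by
  obtain ⟨p⟩ := h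
  induction p with
  | nil => exact .inl .rfl
  | @cons u z y hadj _ ih =>
    rcases hadj with hG | he
    · exact ih.imp hG.reachable.trans (Or.imp (And.imp_left hG.reachable.trans)
        (And.imp_left hG.reachable.trans))
    · obtain ⟨⟨rfl, rfl⟩ | ⟨rfl, rfl⟩, -⟩ := (edge_adj ..).mp he
      · rcases ih with h | ⟨h₁, h₂⟩ | ⟨-, h₂⟩
        exacts [.inr (.inl ⟨.rfl, h⟩), .inl (h₁.symm.trans h₂), .inl h₂]
      · rcases ih with h | ⟨-, h₂⟩ | ⟨h₁, h₂⟩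
        exacts [.inr (.inr ⟨.rfl, h⟩), .inl h₂, .inl (h₁.symm.trans h₂)]

theorem card_connectedComponent_le_card_sup_edge_add_one [Finite V] (G : SimpleGraph V) (a b : V) :
    Nat.card G.ConnectedComponent ≤ Nat.card (G ⊔ edge a b).ConnectedComponent + 1 := by
  classical
  let F : G.ConnectedComponent → Option (G ⊔ edge a b).ConnectedComponent := fun C =>
    if C = G.connectedComponentMk a then none else some (C.map (Hom.ofLE le_sup_left))
  have hF : F.Injective := by
    intro C₁ C₂ hC
    by_cases h₁ : C₁ = G.connectedComponentMk a <;>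
      by_cases h₂ : C₂ = G.connectedComponentMk a <;>
      simp only [F, h₁, h₂, if_true, if_false, reduceCtorEq, Option.some.injEq] at hC
    · rw [h₁, h₂]
    induction C₁ using ConnectedComponent.ind with | _ x =>
    induction C₂ using ConnectedComponent.ind with | _ y =>
    simp only [ConnectedComponent.map_mk, ConnectedComponent.eq] at hC h₁ h₂ ⊢
    rcases hC.of_sup_edge with h | ⟨h, -⟩ | ⟨-, h⟩
    exacts [h, absurd h h₁, absurd h.symm h₂]
  simpa using Nat.card_le_card_of_injective F hF

theorem reachable_edge_swap [DecidableEq V] (a b x : V) : (edge a b).Reachable x (swap a b x) := by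
  have hab : (edge a b).Reachable a b := by
    by_cases h : a = b
    · rw [h]
    · exact Adj.reachable ((edge_adj ..).mpr ⟨.inl ⟨rfl, rfl⟩, h⟩)
  rcases eq_or_ne x a with rfl | hxa
  · simpa using hab
  rcases eq_or_ne x b with rfl | hxb
  · simpa using hab.symm
  · rw [swap_apply_of_ne_of_ne hxa hxb]

end SimpleGraph

section PairGraph

open SimpleGraph Sum

variable {n D D' : ℕ}

theorem pairGraph_adj_inl_inr (σ : Fin D → Perm (Fin n)) (c : Fin D) (s : Fin n) :
    (pairGraph σ).Adj (inl s) (inr (σ c s)) :=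
  (fromRel_adj ..).mpr ⟨inl_ne_inr, .inl ⟨s, _, rfl, rfl, c, rfl⟩⟩

theorem pairGraph_adj_le_reachable {σ : Fin D → Perm (Fin n)} {K : SimpleGraph (Fin n ⊕ Fin n)}
    (h : ∀ c s, K.Reachable (inl s) (inr (σ c s))) : (pairGraph σ).Adj ≤ K.Reachable := by
  rintro _ _ ⟨-, ⟨s, t, rfl, rfl, c, rfl⟩ | ⟨s, t, rfl, rfl, c, rfl⟩⟩
  exacts [h c s, (h c s).symm]

theorem pairGraph_mono {σ : Fin D → Perm (Fin n)} {σ' : Fin D' → Perm (Fin n)}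
    (h : ∀ c, ∃ c', σ' c' = σ c) : pairGraph σ ≤ pairGraph σ' := by
  rintro _ _ ⟨hne, ⟨s, t, rfl, rfl, c, hc⟩ | ⟨s, t, rfl, rfl, c, hc⟩⟩ <;>
    obtain ⟨c', hc'⟩ := h c
  exacts [(fromRel_adj ..).mpr ⟨hne, .inl ⟨s, t, rfl, rfl, c', hc' ▸ hc⟩⟩,
    (fromRel_adj ..).mpr ⟨hne, .inr ⟨s, t, rfl, rfl, c', hc' ▸ hc⟩⟩]

theorem Kp_le_of_forall_exists_eq {σ : Fin D → Perm (Fin n)} {σ' : Fin D' → Perm (Fin n)}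
    (h : ∀ c, ∃ c', σ' c' = σ c) : Kp σ' ≤ Kp σ :=
  ConnectedComponent.card_le_card_of_le (pairGraph_mono h)

theorem Kp_eq_one_of_forall_exists_eq {σ : Fin D → Perm (Fin n)} {σ' : Fin D' → Perm (Fin n)}
    (hσ : Kp σ = 1) (h : ∀ c, ∃ c', σ' c' = σ c) : Kp σ' = 1 :=
  card_connectedComponent_eq_one_of_le (pairGraph_mono h) hσ

theorem Kp_snoc_le (σ : Fin D → Perm (Fin n)) (η : Perm (Fin n)) :
    Kp (Fin.snoc σ η : Fin (D + 1) → Perm (Fin n)) ≤ Kp σ :=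
  Kp_le_of_forall_exists_eq fun c => ⟨c.castSucc, Fin.snoc_castSucc ..⟩

theorem Kp_const [NeZero D] (η : Perm (Fin n)) : Kp (fun _ : Fin D => η) = n := by
  let G := pairGraph fun _ : Fin D => η
  let ψ : Fin n → G.ConnectedComponent := fun s => G.connectedComponentMk (inl s)
  have hψ : ψ.Bijective := by
    refine ⟨fun s s' hs => ?_, fun C => ?_⟩
    · let f : Fin n ⊕ Fin n → Fin n := Sum.elim id ⇑η⁻¹
      have hadj : G.Adj ≤ Function.onFun Eq f := by
        rintro _ _ ⟨-, ⟨s, t, rfl, rfl, -, rfl⟩ | ⟨s, t, rfl, rfl, -, rfl⟩⟩ <;>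
          simp [f, Function.onFun]
      have := Relation.ReflTransGen.lift f hadj _ _
        (reachable_eq_reflTransGen (G := G) ▸ ConnectedComponent.exact hs)
      simpa [f, Function.onFun, Relation.reflTransGen_eq_self] using this
    · induction C using ConnectedComponent.ind with
      | _ v =>
        rcases v with s | t
        · exact ⟨s, rfl⟩
        · refine ⟨η⁻¹ t, ConnectedComponent.sound (Adj.reachable ?_)⟩
          simpa using pairGraph_adj_inl_inr (fun _ : Fin D => η) 0 (η⁻¹ t)
  rw [Kp, ← Nat.card_eq_of_bijective ψ hψ, Nat.card_fin]

theorem Kp_le_Kp_update_swap_mul_add_one (ρ : Fin D → Perm (Fin n)) (c : Fin D) (u v : Fin n) :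
    Kp ρ ≤ Kp (Function.update ρ c (swap u v * ρ c)) + 1 := by
  let G := pairGraph ρ ⊔ edge (inr u) (inr v)
  have hreach :
      ∀ c' s, G.Reachable (inl s) (inr (Function.update ρ c (swap u v * ρ c) c' s)) := by
    intro c' s
    have hρ : G.Reachable (inl s) (inr (ρ c' s)) :=
      ((pairGraph_adj_inl_inr ρ c' s).reachable).mono le_sup_left
    rcases eq_or_ne c' c with rfl | hc'
    · rw [Function.update_self, mul_apply, ← inr_injective.swap_apply]
      exact hρ.trans ((reachable_edge_swap ..).mono le_sup_right)
    · rwa [Function.update_of_ne hc']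
  calc Kp ρ ≤ Nat.card G.ConnectedComponent + 1 :=
        card_connectedComponent_le_card_sup_edge_add_one _ _ _
    _ ≤ _ := by
      gcongr
      exact card_connectedComponent_le_of_adj_le_reachable (pairGraph_adj_le_reachable hreach)

end PairGraph

section Distance

variable {n D : ℕ}

theorem dTuple_comm (σ τ : Fin D → Perm (Fin n)) : dTuple σ τ = dTuple τ σ :=
  Finset.sum_congr rfl fun c _ => permLen_mul_inv_comm (σ c) (τ c)

theorem dTuple_eq_zero_iff {ρ σ : Fin D → Perm (Fin n)} : dTuple ρ σ = 0 ↔ ρ = σ := by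
  simp [dTuple, Finset.sum_eq_zero_iff, permLen_eq_zero_iff, mul_inv_eq_one, funext_iff]

theorem exists_dTuple_update_swap_mul {ρ σ : Fin D → Perm (Fin n)} (h : ρ ≠ σ) :
    ∃ c u v, dTuple (Function.update ρ c (swap u v * ρ c)) σ + 1 = dTuple ρ σ := by
  obtain ⟨c, hc⟩ := Function.ne_iff.mp h
  obtain ⟨u, v, huv⟩ := exists_permLen_swap_mul (mt mul_inv_eq_one.mp hc)
  refine ⟨c, u, v, ?_⟩
  have hsum (π : Perm (Fin n)) : dTuple (Function.update ρ c π) σ =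
      permLen (π * (σ c)⁻¹) +
        ∑ c' ∈ Finset.univ.erase c, permLen (ρ c' * (σ c')⁻¹) := by
    rw [dTuple, ← Finset.add_sum_erase _ _ (Finset.mem_univ c), Function.update_self]
    congr 1
    exact Finset.sum_congr rfl fun c' hc' => by
      rw [Function.update_of_ne (Finset.ne_of_mem_erase hc')]
  have := hsum (ρ c)
  rw [Function.update_eq_self] at this
  rw [hsum, this, mul_assoc, ← huv]
  ring

theorem Kp_le_Kp_add_dTuple (ρ σ : Fin D → Perm (Fin n)) : Kp ρ ≤ Kp σ + dTuple ρ σ := by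
  induction hk : dTuple ρ σ generalizing ρ with
  | zero => rw [dTuple_eq_zero_iff.mp hk]; simp
  | succ k ih =>
    have hne : ρ ≠ σ := by rintro rfl; rw [dTuple_eq_zero_iff.mpr rfl] at hk; omega
    obtain ⟨c, u, v, hstep⟩ := exists_dTuple_update_swap_mul hne
    have := ih (Function.update ρ c (swap u v * ρ c)) (by omega)
    have := Kp_le_Kp_update_swap_mul_add_one ρ c u v
    omega

theorem dTuple_const_snoc (ρ : Fin D → Perm (Fin n)) (η : Perm (Fin n)) :
    dTuple (fun _ => η) (Fin.snoc ρ η : Fin (D + 1) → Perm (Fin n)) = dEta ρ η := by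
  simp [dTuple, dEta, Fin.sum_univ_castSucc, permLen_mul_inv_comm η, permLen_eq_zero_iff]

theorem card_le_Kp_snoc_add_dEta (ρ : Fin D → Perm (Fin n)) (η : Perm (Fin n)) :
    n ≤ Kp (Fin.snoc ρ η : Fin (D + 1) → Perm (Fin n)) + dEta ρ η := by
  simpa [Kp_const, dTuple_const_snoc] using Kp_le_Kp_add_dTuple (fun _ => η) (Fin.snoc ρ η)

theorem dEta_add_dTuple_of_geodesicLe {σ τ : Fin D → Perm (Fin n)} {η : Perm (Fin n)}
    (h : ∀ c, geodesicLe (τ c * η⁻¹) (σ c * η⁻¹)) :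
    dEta τ η + dTuple τ σ = dEta σ η := by
  rw [dEta, dTuple, dEta, ← Finset.sum_add_distrib]
  refine Finset.sum_congr rfl fun c _ => ?_
  simpa [geodesicLe, mul_assoc] using h c

end Distance

theorem noncrossing_below_melonic_general
    (n D : ℕ)
    (σ τ : Fin D → Equiv.Perm (Fin n)) (η : Equiv.Perm (Fin n))
    (hK : Kp σ = 1) (hcan : omegaBar σ η = 0)
    (hgeo : ∀ c, geodesicLe (τ c * η⁻¹) (σ c * η⁻¹)) :
    omegaBar τ η = 0 ∧
      Kp (Fin.snoc τ η : Fin (D + 1) → Equiv.Perm (Fin n)) = Kp τ ∧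
      Kp (Fin.append σ τ : Fin (D + D) → Equiv.Perm (Fin n)) + dTuple σ τ =
        Kp τ := by
  have hKση : Kp (Fin.snoc σ η : Fin (D + 1) → Perm (Fin n)) = 1 :=
    Kp_eq_one_of_forall_exists_eq hK fun c => ⟨c.castSucc, Fin.snoc_castSucc ..⟩
  have hKστ : Kp (Fin.append σ τ : Fin (D + D) → Perm (Fin n)) = 1 :=
    Kp_eq_one_of_forall_exists_eq hK fun c => ⟨Fin.castAdd D c, Fin.append_left ..⟩
  have hdση : dEta σ η + 1 = n := by
    simp only [omegaBar, hKση, hK] at hcan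
    push_cast at hcan
    omega
  have hsplit := dEta_add_dTuple_of_geodesicLe hgeo
  have hup := Kp_le_Kp_add_dTuple τ σ
  have hlow := card_le_Kp_snoc_add_dEta τ η
  have hsnoc := Kp_snoc_le τ η
  have hKτ : Kp τ + dEta τ η = n := by omega
  refine ⟨?_, by omega, by rw [hKστ, dTuple_comm]; omega⟩
  have hKτ' : (Kp τ : ℤ) + dEta τ η = n := by exact_mod_cast hKτ
  rw [omegaBar, show Kp (Fin.snoc τ η : Fin (D + 1) → Perm (Fin n)) = Kp τ by omega]
  linear_combination hKτ'

/-- Let `σ` be purely connected and melonic with canonical pairing `η`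
(`K_p(σ) = 1`, `ω̄(σ;η) = 0`), `D ≥ 3`. If `τ_c η⁻¹ ⪯ σ_c η⁻¹` for every `c`,
then `ω̄(τ;η) = 0`, `K_p(τ⌢η) = K_p(τ)`, and `K_p(σ⌢τ) + d(σ,τ) = K_p(τ)`. -/
theorem noncrossing_below_melonic
    (n D : ℕ) (hn : 1 ≤ n) (hD : 3 ≤ D)
    (σ τ : Fin D → Equiv.Perm (Fin n)) (η : Equiv.Perm (Fin n))
    (hK : Kp σ = 1) (hcan : omegaBar σ η = 0)
    (hgeo : ∀ c, geodesicLe (τ c * η⁻¹) (σ c * η⁻¹)) :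
    omegaBar τ η = 0 ∧
      Kp (Fin.snoc τ η : Fin (D + 1) → Equiv.Perm (Fin n)) = Kp τ ∧
      Kp (Fin.append σ τ : Fin (D + D) → Equiv.Perm (Fin n)) + dTuple σ τ =
        Kp τ :=
  noncrossing_below_melonic_general n D σ τ η hK hcan hgeo
end
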